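/- arXiv:0712.3509 — 8 statements merged into one kernel-verified Lean document; each statement's English description precedes it below -/
import Mathlib

section
/- No odd Fibonacci number is divisible by 17; that is, for every natural number n, if the n-th Fibonacci number is odd, then 17 does not divide it. -/
lemma fib_mod34_pair : ∀ n : ℕ,
    Nat.fib (n + 36) % 34 = Nat.fib n % 34 ∧
    Nat.fib (n + 37) % 34 = Nat.fib (n + 1) % 34 := by
  intro n
  induction n with
  | zero => decide
  | succ k ih =>
    obtain ⟨h1, h2⟩ := ih
    refine ⟨h2, ?_⟩
    have hF : Nat.fib (k + 1 + 37) = Nat.fib (k + 36) + Nat.fib (k + 37) := by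
      have := Nat.fib_add_two (n := k + 36)
      simpa [show k + 36 + 2 = k + 1 + 37 from by ring,
        show k + 36 + 1 = k + 37 from by ring] using this
    have hG : Nat.fib (k + 1 + 1) = Nat.fib k + Nat.fib (k + 1) := by
      have := Nat.fib_add_two (n := k)
      simpa [show k + 2 = k + 1 + 1 from by ring] using this
    rw [hF, hG, Nat.add_mod, h1, h2, ← Nat.add_mod]

lemma fib_mod34_period : ∀ q r : ℕ, Nat.fib (36 * q + r) % 34 = Nat.fib r % 34 := by
  intro q
  induction q with
  | zero => intro r; simp
  | succ k ih =>
    intro r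
    have : 36 * (k + 1) + r = (36 * k + r) + 36 := by ring
    rw [this, (fib_mod34_pair (36 * k + r)).1, ih]

lemma fib_mod34_ne17 : ∀ r < 36, Nat.fib r % 34 ≠ 17 := by decide

theorem no_odd_fib_div_17 : ∀ n : ℕ, Odd (Nat.fib n) → ¬ (17 ∣ Nat.fib n) := by
  intro n ho hd
  have hper : Nat.fib n % 34 = Nat.fib (n % 36) % 34 := by
    conv_lhs => rw [← Nat.div_add_mod n 36]
    exact fib_mod34_period (n / 36) (n % 36)
  have h2 : Nat.fib n % 2 = 1 := Nat.odd_iff.mp ho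
  have h17 : Nat.fib n % 17 = 0 := by omega
  have hm17 : Nat.fib n % 34 % 17 = 0 := by
    rw [Nat.mod_mod_of_dvd _ (by norm_num)]; exact h17
  have hm2 : Nat.fib n % 34 % 2 = 1 := by
    rw [Nat.mod_mod_of_dvd _ (by norm_num)]; exact h2
  have hlt : Nat.fib n % 34 < 34 := Nat.mod_lt _ (by norm_num)
  have heq : Nat.fib n % 34 = 17 := by omega
  exact fib_mod34_ne17 (n % 36) (Nat.mod_lt _ (by norm_num)) (hper ▸ heq)
end

section
/- No odd Fibonacci number is divisible by 9; that is, for every natural number n, if F(n) is odd, then 9 does not divide F(n). -/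
lemma fib_mod18_pair : ∀ n : ℕ, Nat.fib (n+24) % 18 = Nat.fib n % 18 ∧
    Nat.fib (n+25) % 18 = Nat.fib (n+1) % 18 := by
  intro n
  induction n with
  | zero => decide
  | succ k ih =>
    refine ⟨ih.2, ?_⟩
    have e1 : Nat.fib (k+26) = Nat.fib (k+25) + Nat.fib (k+24) := by
      rw [show k+26 = (k+24)+2 from by ring, Nat.fib_add_two]; ring
    have e2 : Nat.fib (k+2) = Nat.fib (k+1) + Nat.fib k := by
      rw [Nat.fib_add_two]; ring
    have h1 := ih.1; have h2 := ih.2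
    simp only [show k+1+25 = k+26 from by ring, show k+1+1 = k+2 from rfl, e1, e2]
    omega

lemma fib_mod18_period : ∀ n : ℕ, Nat.fib n % 18 = Nat.fib (n % 24) % 18 := by
  intro n
  induction n using Nat.strong_induction_on with
  | _ n ih =>
    by_cases h : n < 24
    · rw [Nat.mod_eq_of_lt h]
    · have hn : n = (n - 24) + 24 := by omega
      rw [hn, (fib_mod18_pair (n-24)).1, ih (n-24) (by omega), Nat.add_mod_right]

theorem no_odd_fib_div_9 : ∀ n : ℕ, Odd (Nat.fib n) → ¬ (9 ∣ Nat.fib n) := by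
  intro n hodd hdvd
  have h2 : Nat.fib n % 2 = 1 := Nat.odd_iff.mp hodd
  obtain ⟨k, hk⟩ := hdvd
  have hp := fib_mod18_period n
  have hm : n % 24 < 24 := Nat.mod_lt _ (by norm_num)
  have key : Nat.fib (n % 24) % 18 ≠ 9 := by
    interval_cases h : (n % 24) <;> decide
  omega
end

section
/- The Pisano period of K is at most 6K for every K ≥ 1. -/
/-!
In `ℤ[φ] = ℤ[X]/(X² - X - 1)` one has `φ^(n+1) = F(n+1) φ + F(n)`, so `B` is a period of the
Fibonacci numbers modulo `K` exactly when `K ∣ φ^B - 1`. In this form periods combine over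
coprime moduli, and a period `B` modulo `p` lifts to the period `B p^k` modulo `p^(k+1)`.
For a prime `p ∉ {2, 5}` the Frobenius permutes the two distinct roots of `X² - X - 1` in a
field of characteristic `p`; this gives a period `p - 1` or `2(p + 1)`. Together with the
periods `3` modulo `2` and `20` modulo `5`, every odd `m` has a period `4c` with `c ≤ m`, and
then `K = 2^(k+1) m` has the period `3 · 2^k · 4c ≤ 6K`.
-/

open QuadraticAlgebra

local notation "ℤ[φ]" => QuadraticAlgebra ℤ 1 1

theorem pow_succ_eq_fib_mul_add_fib {R : Type*} [CommRing R] {x : R} (hx : x ^ 2 = x + 1)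
    (n : ℕ) : x ^ (n + 1) = Nat.fib (n + 1) * x + Nat.fib n := by
  induction n with
  | zero => simp
  | succ n ih =>
    rw [pow_succ, ih, Nat.fib_add_two]
    push_cast
    linear_combination (Nat.fib (n + 1) : R) * hx

namespace QuadraticAlgebra

variable {R : Type*} [CommRing R]

theorem natCast_dvd_iff {a b : R} {K : ℕ} {z : QuadraticAlgebra R a b} :
    (K : QuadraticAlgebra R a b) ∣ z ↔ (K : R) ∣ z.re ∧ (K : R) ∣ z.im := by
  rw [← algebraMap_dvd_iff, map_natCast]

theorem omega_sq_eq_omega_add_one : (ω : QuadraticAlgebra R 1 1) ^ 2 = ω + 1 := by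
  ext <;> simp [sq]

theorem omega_pow_succ (n : ℕ) :
    (ω : QuadraticAlgebra R 1 1) ^ (n + 1) = ⟨Nat.fib n, Nat.fib (n + 1)⟩ := by
  rw [pow_succ_eq_fib_mul_add_fib omega_sq_eq_omega_add_one]
  ext <;> simp

theorem im_omega_pow (n : ℕ) : ((ω : QuadraticAlgebra R 1 1) ^ n).im = Nat.fib n := by
  cases n with
  | zero => simp
  | succ n => rw [omega_pow_succ]

theorem isUnit_omega : IsUnit (ω : QuadraticAlgebra R 1 1) :=
  IsUnit.of_mul_eq_one (ω - 1) (by ext <;> simp)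

end QuadraticAlgebra

def IsFibPeriod (K B : ℕ) : Prop := (K : ℤ[φ]) ∣ ω ^ B - 1

theorem isFibPeriod_iff {K B : ℕ} :
    IsFibPeriod K B ↔ Nat.fib B ≡ 0 [MOD K] ∧ Nat.fib (B + 1) ≡ 1 [MOD K] := by
  have h : ω * ((ω : ℤ[φ]) ^ B - 1) = ⟨Nat.fib B, Nat.fib (B + 1) - 1⟩ := by
    rw [mul_sub, ← pow_succ', omega_pow_succ]
    ext <;> simp
  rw [IsFibPeriod, ← isUnit_omega.dvd_mul_left, h, natCast_dvd_iff, Nat.modEq_zero_iff_dvd,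
    Nat.ModEq.comm, Nat.modEq_iff_dvd, Int.natCast_dvd_natCast]
  simp

theorem isFibPeriod_one (B : ℕ) : IsFibPeriod 1 B := by
  simp [IsFibPeriod]

theorem isFibPeriod_two_three : IsFibPeriod 2 3 := isFibPeriod_iff.2 (by decide)

theorem isFibPeriod_five_twenty : IsFibPeriod 5 20 := isFibPeriod_iff.2 (by decide)

namespace IsFibPeriod

variable {K B : ℕ}

theorem fib_add_modEq (h : IsFibPeriod K B) (n : ℕ) : Nat.fib (n + B) ≡ Nat.fib n [MOD K] := by
  have h' := (natCast_dvd_iff.1 (h.mul_left ((ω : ℤ[φ]) ^ n))).2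
  rw [mul_sub, mul_one, ← pow_add, im_sub, im_omega_pow, im_omega_pow] at h'
  exact (Nat.modEq_iff_dvd.2 h').symm

theorem of_dvd {C : ℕ} (h : IsFibPeriod K B) (hBC : B ∣ C) : IsFibPeriod K C := by
  obtain ⟨t, rfl⟩ := hBC
  simpa [IsFibPeriod, pow_mul] using h.trans (sub_one_dvd_pow_sub_one (ω ^ B) t)

theorem mul_of_coprime {K' : ℕ} (hK : K.Coprime K') (h : IsFibPeriod K B)
    (h' : IsFibPeriod K' B) : IsFibPeriod (K * K') B := by
  have hco : IsCoprime (K : ℤ[φ]) (K' : ℤ[φ]) := by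
    simpa using (Nat.isCoprime_iff_coprime.2 hK).map (Int.castRingHom ℤ[φ])
  rw [IsFibPeriod, Nat.cast_mul]
  exact hco.mul_dvd h h'

theorem pow_succ {p : ℕ} (h : IsFibPeriod p B) (k : ℕ) :
    IsFibPeriod (p ^ (k + 1)) (B * p ^ k) := by
  simpa [IsFibPeriod, pow_mul] using dvd_sub_pow_of_dvd_sub h k

end IsFibPeriod

section CharP

variable {p : ℕ} {L : Type*} [CommRing L] [IsDomain L] [CharP L p]

theorem isFibPeriod_of_pow_eq_one {u : L} (hu : u ^ 2 = u + 1) (h5 : (5 : L) ≠ 0) {B : ℕ}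
    (huB : u ^ B = 1) (hsB : (1 - u) ^ B = 1) : IsFibPeriod p B := by
  have key : ∀ x : L, x ^ 2 = x + 1 → x ^ B = 1 →
      ((Nat.fib (B + 1) : L) - 1) * x + Nat.fib B = 0 := by
    intro x hx hxB
    have := pow_succ_eq_fib_mul_add_fib hx B
    rw [pow_succ, hxB, one_mul] at this
    linear_combination -this
  have hu' := key u hu huB
  have hs' := key (1 - u) (by linear_combination hu) hsB
  -- `(2u - 1)² = 5`, so the two roots `u` and `1 - u` are distinct
  have hdisc : 2 * u - 1 ≠ 0 := fun h ↦ h5 (by linear_combination (2 * u - 1) * h - 4 * hu)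
  have h1 : (Nat.fib (B + 1) : L) = 1 := by
    have : ((Nat.fib (B + 1) : L) - 1) * (2 * u - 1) = 0 := by linear_combination hu' - hs'
    exact sub_eq_zero.1 ((mul_eq_zero.1 this).resolve_right hdisc)
  have h0 : (Nat.fib B : L) = 0 := by linear_combination hu' - u * h1
  refine isFibPeriod_iff.2 ⟨?_, ?_⟩
  · exact (CharP.natCast_eq_natCast L p).1 (by simpa using h0)
  · exact (CharP.natCast_eq_natCast L p).1 (by simpa using h1)

theorem pow_char_eq_self_or_eq_one_sub [Fact p.Prime] {x : L} (hx : x ^ 2 = x + 1) :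
    x ^ p = x ∨ x ^ p = 1 - x := by
  have hfrob : (x ^ p) ^ 2 = x ^ p + 1 := by
    rw [← pow_mul, mul_comm, pow_mul, hx, add_pow_char, one_pow]
  have : (x ^ p - x) * (x ^ p - (1 - x)) = 0 := by linear_combination hfrob - hx
  rcases mul_eq_zero.1 this with h | h
  · exact Or.inl (sub_eq_zero.1 h)
  · exact Or.inr (sub_eq_zero.1 h)

end CharP

open Polynomial in
theorem exists_isFibPeriod_four_mul_of_prime {p : ℕ} (hp : p.Prime) (hp2 : p ≠ 2) :
    ∃ c, 0 < c ∧ c ≤ p ∧ IsFibPeriod p (4 * c) := by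
  obtain rfl | hp5 := eq_or_ne p 5
  · exact ⟨5, by norm_num, le_rfl, isFibPeriod_five_twenty⟩
  have := Fact.mk hp
  let L := AlgebraicClosure (ZMod p)
  obtain ⟨u, hu⟩ : ∃ u : L, u ^ 2 = u + 1 := by
    obtain ⟨u, hu⟩ := IsAlgClosed.exists_root (X ^ 2 - X - 1 : L[X]) <| by
      rw [show (X ^ 2 - X - 1 : L[X]).degree = 2 by compute_degree!]; decide
    exact ⟨u, by linear_combination (by simpa using hu : u ^ 2 - u - 1 = 0)⟩
  have h5 : (5 : L) ≠ 0 := fun h ↦ hp5 <| (Nat.prime_dvd_prime_iff_eq hp Nat.prime_five).1 <|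
    (CharP.cast_eq_zero_iff L p 5).1 (by exact_mod_cast h)
  have hs : (1 - u) ^ 2 = (1 - u) + 1 := by linear_combination hu
  have hsp : (1 - u) ^ p = 1 - u ^ p := by rw [sub_pow_char, one_pow]
  obtain ⟨j, rfl⟩ := hp.odd_of_ne_two hp2
  have hj : 0 < j := by have := hp.two_le; omega
  rcases pow_char_eq_self_or_eq_one_sub hu with h | h
  · have pow_eq_one : ∀ x : L, x ^ 2 = x + 1 → x ^ (2 * j + 1) = x → x ^ (2 * j) = 1 := by
      intro x hx hxp
      have hx0 : x ≠ 0 := by rintro rfl; norm_num at hx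
      exact (mul_left_eq_self₀.1 (by rwa [← pow_succ])).resolve_right hx0
    refine ⟨2 * j, by omega, by omega, (isFibPeriod_of_pow_eq_one hu h5 ?_ ?_).of_dvd
      (dvd_mul_left _ _)⟩
    · exact pow_eq_one u hu h
    · exact pow_eq_one (1 - u) hs (by rw [hsp, h])
  · have pow_eq_one : ∀ x : L, x ^ 2 = x + 1 → x ^ (2 * j + 1) = 1 - x →
        x ^ (4 * (j + 1)) = 1 := by
      intro x hx hxp
      rw [show 4 * (j + 1) = (2 * j + 1 + 1) * 2 by ring, pow_mul, pow_succ x (2 * j + 1), hxp]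
      linear_combination (x ^ 2 - x + 1) * hx
    refine ⟨j + 1, by omega, by omega, isFibPeriod_of_pow_eq_one hu h5 ?_ ?_⟩
    · exact pow_eq_one u hu h
    · exact pow_eq_one (1 - u) hs (by rw [hsp, h])

theorem exists_isFibPeriod_four_mul_of_odd {m : ℕ} (hm : Odd m) :
    ∃ c, 0 < c ∧ c ≤ m ∧ IsFibPeriod m (4 * c) := by
  induction m using Nat.recOnPosPrimePosCoprime with
  | prime_pow p n hp hn =>
    obtain ⟨k, rfl⟩ := Nat.exists_eq_add_of_lt hn
    have hp2 : p ≠ 2 := by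
      rintro rfl
      exact Nat.not_even_iff_odd.2 hm ((Nat.even_pow' (by omega)).2 even_two)
    obtain ⟨c, hc0, hcp, hc⟩ := exists_isFibPeriod_four_mul_of_prime hp hp2
    refine ⟨c * p ^ k, Nat.mul_pos hc0 (pow_pos hp.pos k), ?_, by
      simpa [mul_assoc] using hc.pow_succ k⟩
    calc c * p ^ k ≤ p * p ^ k := by gcongr
      _ = p ^ (0 + k + 1) := by ring
  | zero => exact absurd hm (by decide)
  | one => exact ⟨1, one_pos, le_rfl, isFibPeriod_one _⟩
  | coprime a b _ _ hab iha ihb =>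
    obtain ⟨ha, hb⟩ := Nat.odd_mul.1 hm
    obtain ⟨c, hc0, hca, hc⟩ := iha ha
    obtain ⟨d, hd0, hdb, hd⟩ := ihb hb
    refine ⟨c * d, by positivity, by gcongr, ?_⟩
    exact (hc.of_dvd ⟨d, by ring⟩).mul_of_coprime hab (hd.of_dvd ⟨c, by ring⟩)

theorem exists_isFibPeriod_le_six_mul {K : ℕ} (hK : K ≠ 0) :
    ∃ P, 0 < P ∧ P ≤ 6 * K ∧ IsFibPeriod K P := by
  obtain ⟨a, m, hm, rfl⟩ := Nat.exists_eq_two_pow_mul_odd hK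
  obtain ⟨c, hc0, hcm, hc⟩ := exists_isFibPeriod_four_mul_of_odd hm
  cases a with
  | zero => exact ⟨4 * c, by positivity, by omega, by simpa using hc⟩
  | succ k =>
    refine ⟨3 * 2 ^ k * (4 * c), by positivity, ?_, ?_⟩
    · calc 3 * 2 ^ k * (4 * c) ≤ 3 * 2 ^ k * (4 * m) := by gcongr
        _ = 6 * (2 ^ (k + 1) * m) := by ring
    · exact ((isFibPeriod_two_three.pow_succ k).of_dvd (dvd_mul_right _ _)).mul_of_coprime
        (Nat.Coprime.pow_left _ (Nat.coprime_two_left.2 hm)) (hc.of_dvd (dvd_mul_left _ _))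

theorem pisano_le (K : ℕ) (hK : 1 ≤ K) :
    sInf {P : ℕ | 0 < P ∧ ∀ n : ℕ, Nat.fib (n + P) ≡ Nat.fib n [MOD K]} ≤ 6 * K := by
  obtain ⟨P, hP0, hPK, hP⟩ := exists_isFibPeriod_le_six_mul (K := K) (by omega)
  refine (Nat.sInf_le ?_).trans hPK
  exact ⟨hP0, hP.fib_add_modEq⟩
end

section
/- If the smallest positive Fibonacci number divisible by an odd prime K is even, then no odd Fibonacci number is divisible by K. -/
lemma three_dvd_of_even_fib (m : ℕ) (h : Even (Nat.fib m)) : 3 ∣ m := by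
  have h2 : 2 ∣ Nat.fib (Nat.gcd 3 m) := by
    rw [Nat.fib_gcd]
    exact Nat.dvd_gcd (by norm_num) h.two_dvd
  have hd : Nat.gcd 3 m ∣ 3 := Nat.gcd_dvd_left 3 m
  have : Nat.gcd 3 m = 1 ∨ Nat.gcd 3 m = 3 := (Nat.prime_three.eq_one_or_self_of_dvd _ hd)
  rcases this with h | h
  · rw [h] at h2; simp [Nat.fib] at h2
  · exact h ▸ Nat.gcd_dvd_right 3 m

theorem smallest_fib_even_imp (K : ℕ) (hK : K.Prime) (hodd : Odd K)
    (m : ℕ) (hm : m = sInf {k : ℕ | 0 < k ∧ K ∣ Nat.fib k})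
    (heven : Even (Nat.fib m)) :
    ∀ n : ℕ, Odd (Nat.fib n) → ¬ K ∣ Nat.fib n := by
  intro n hn hdvd
  have hn0 : n ≠ 0 := by
    rintro rfl
    simp [Nat.fib] at hn
  by_cases hne : {k : ℕ | 0 < k ∧ K ∣ Nat.fib k}.Nonempty
  · have hmem : m ∈ {k : ℕ | 0 < k ∧ K ∣ Nat.fib k} := hm ▸ Nat.sInf_mem hne
    obtain ⟨hmpos, hmdvd⟩ := hmem
    have hg : Nat.gcd m n ∈ {k : ℕ | 0 < k ∧ K ∣ Nat.fib k} := by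
      refine ⟨Nat.gcd_pos_of_pos_left n hmpos, ?_⟩
      rw [Nat.fib_gcd]
      exact Nat.dvd_gcd hmdvd hdvd
    have hle : m ≤ Nat.gcd m n := by subst hm; exact Nat.sInf_le hg
    have hge : Nat.gcd m n ≤ m := Nat.le_of_dvd hmpos (Nat.gcd_dvd_left m n)
    have hmn : m ∣ n := by
      have : Nat.gcd m n = m := le_antisymm hge hle
      exact this ▸ Nat.gcd_dvd_right m n
    have h3 : 3 ∣ n := (three_dvd_of_even_fib m heven).trans hmn
    have : Nat.fib 3 ∣ Nat.fib n := Nat.fib_dvd 3 n h3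
    have h2 : 2 ∣ Nat.fib n := by simpa [Nat.fib] using this
    exact (Nat.not_even_iff_odd.mpr hn) (even_iff_two_dvd.mpr h2)
  · exact hne ⟨n, Nat.pos_of_ne_zero hn0, hdvd⟩
end

section
/- If n and m are coprime positive integers greater than 1 and no odd Fibonacci number is divisible by n·m, then no odd Fibonacci number is divisible by n, or no odd Fibonacci number is divisible by m. -/
/-! Fibonacci numbers are odd exactly at indices not divisible by 3, so the odd ones are closed
under passing from `fib a` and `fib b` to `fib (a * b)`, which both divide. Hence if `n` divides an
odd Fibonacci number and `m` another, the coprime product `n * m` divides an odd one as well. -/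

namespace Nat

theorem even_fib_iff_three_dvd : ∀ k : ℕ, Even (fib k) ↔ 3 ∣ k
  | 0 => by simp
  | 1 => by decide
  | 2 => by decide
  | k + 3 => by
    have hrec : fib (k + 3) = fib k + 2 * fib (k + 1) := by
      rw [fib_add_two, fib_add_two]
      ring
    rw [hrec, Nat.even_add, iff_true_right (even_two_mul _), Nat.dvd_add_self_right]
    exact even_fib_iff_three_dvd k

theorem odd_fib_iff_not_three_dvd (k : ℕ) : Odd (fib k) ↔ ¬ 3 ∣ k := by
  rw [← not_even_iff_odd, even_fib_iff_three_dvd]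

theorem odd_fib_mul {a b : ℕ} (ha : Odd (fib a)) (hb : Odd (fib b)) : Odd (fib (a * b)) := by
  rw [odd_fib_iff_not_three_dvd] at *
  rw [prime_three.dvd_mul]
  tauto

theorem exists_odd_fib_mul_dvd_of_coprime {n m a b : ℕ} (hco : n.Coprime m)
    (ha : Odd (fib a)) (hna : n ∣ fib a) (hb : Odd (fib b)) (hmb : m ∣ fib b) :
    ∃ k, Odd (fib k) ∧ n * m ∣ fib k :=
  ⟨a * b, odd_fib_mul ha hb, hco.mul_dvd_of_dvd_of_dvd
    (hna.trans (fib_dvd _ _ (dvd_mul_right a b))) (hmb.trans (fib_dvd _ _ (dvd_mul_left b a)))⟩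

end Nat

theorem no_odd_fib_div_mul_general (n m : ℕ) (hco : Nat.Coprime n m)
    (h : ∀ k : ℕ, Odd (Nat.fib k) → ¬ (n * m ∣ Nat.fib k)) :
    (∀ k : ℕ, Odd (Nat.fib k) → ¬ (n ∣ Nat.fib k)) ∨
    (∀ k : ℕ, Odd (Nat.fib k) → ¬ (m ∣ Nat.fib k)) := by
  by_contra! hcon
  obtain ⟨⟨a, ha, hna⟩, ⟨b, hb, hmb⟩⟩ := hcon
  obtain ⟨k, hk, hnmk⟩ := Nat.exists_odd_fib_mul_dvd_of_coprime hco ha hna hb hmb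
  exact h k hk hnmk

theorem no_odd_fib_div_mul (n m : ℕ) (hn : 1 < n) (hm : 1 < m) (hco : Nat.Coprime n m)
    (h : ∀ k : ℕ, Odd (Nat.fib k) → ¬ (n * m ∣ Nat.fib k)) :
    (∀ k : ℕ, Odd (Nat.fib k) → ¬ (n ∣ Nat.fib k)) ∨
    (∀ k : ℕ, Odd (Nat.fib k) → ¬ (m ∣ Nat.fib k)) :=
  no_odd_fib_div_mul_general n m hco h
end

section
/- For all positive integers a and m, 2^(a-1) · F(a·m) ≡ a · F(m) · L(m)^(a-1) (mod F(m)^2), where F is the Fibonacci sequence and L the Lucas sequence. -/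
def lucas : ℕ → ℕ
  | 0 => 2
  | 1 => 1
  | n + 2 => lucas n + lucas (n + 1)

lemma lucas_add_two (n : ℕ) : lucas (n + 2) = lucas n + lucas (n + 1) := rfl

lemma lucas_eq (n : ℕ) : (lucas n : ℤ) = 2 * Nat.fib (n + 1) - Nat.fib n := by
  induction n using Nat.twoStepInduction with
  | zero => simp [lucas]
  | one => simp [lucas]
  | more n ih1 ih2 =>
    rw [lucas_add_two]
    push_cast [Nat.fib_add_two] at *
    linarith

lemma two_fib_add (m : ℕ) : ∀ n : ℕ,
    2 * (Nat.fib (m + n) : ℤ) = Nat.fib m * lucas n + Nat.fib n * lucas m := by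
  intro n
  induction n using Nat.twoStepInduction with
  | zero => simp [lucas]; ring
  | one =>
    rw [lucas_eq m]
    simp [lucas]
  | more n ih1 ih2 =>
    have e1 : m + (n + 2) = (m + n) + 2 := by ring
    have e2 : m + (n + 1) = (m + n) + 1 := by ring
    rw [e1, lucas_add_two]
    rw [e2] at ih2
    push_cast [Nat.fib_add_two] at *
    linear_combination ih1 + ih2

lemma two_lucas_add (m : ℕ) : ∀ n : ℕ,
    2 * (lucas (m + n) : ℤ) = lucas m * lucas n + 5 * Nat.fib m * Nat.fib n := by
  intro n
  induction n using Nat.twoStepInduction with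
  | zero => simp [lucas]; ring
  | one =>
    rw [lucas_eq m, lucas_eq (m + 1)]
    simp [lucas]
    push_cast [Nat.fib_add_two]
    ring
  | more n ih1 ih2 =>
    have e1 : m + (n + 2) = (m + n) + 2 := by ring
    have e2 : m + (n + 1) = (m + n) + 1 := by ring
    rw [e1, lucas_add_two, lucas_add_two n]
    rw [e2] at ih2
    push_cast [Nat.fib_add_two] at *
    linear_combination ih1 + ih2

lemma key_lemma (m b : ℕ) :
    ((2 ^ b * Nat.fib ((b + 1) * m) : ℤ) ≡
      ((b + 1 : ℕ) * Nat.fib m * (lucas m) ^ b : ℤ) [ZMOD ((Nat.fib m : ℤ) ^ 2)]) ∧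
    ((2 ^ b * lucas ((b + 1) * m) : ℤ) ≡
      ((lucas m : ℤ) ^ (b + 1)) [ZMOD ((Nat.fib m : ℤ) ^ 2)]) := by
  induction b with
  | zero => simp
  | succ b ih =>
    obtain ⟨h1, h2⟩ := ih
    rw [Int.modEq_iff_dvd] at h1 h2
    obtain ⟨k1, hk1⟩ := h1
    obtain ⟨k2, hk2⟩ := h2
    have key1 := two_fib_add ((b + 1) * m) m
    have key2 := two_lucas_add ((b + 1) * m) m
    have hm : (b + 1 + 1) * m = (b + 1) * m + m := by ring
    push_cast at hk1 hk2 ⊢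
    constructor
    · rw [hm, Int.modEq_iff_dvd]
      refine ⟨(lucas m : ℤ) * k1 + (Nat.fib m : ℤ) * k2, ?_⟩
      push_cast
      linear_combination (lucas m : ℤ) * hk1 + (Nat.fib m : ℤ) * hk2 - 2 ^ b * key1
    · rw [hm, Int.modEq_iff_dvd]
      refine ⟨(lucas m : ℤ) * k2 + 5 * (Nat.fib m : ℤ) * k1
        - 5 * ((b : ℤ) + 1) * (lucas m : ℤ) ^ b, ?_⟩
      push_cast
      linear_combination (lucas m : ℤ) * hk2 + 5 * (Nat.fib m : ℤ) * hk1 - 2 ^ b * key2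

theorem fib_mul_mod_sq (a m : ℕ) (ha : 0 < a) (hm : 0 < m) :
    (2 ^ (a - 1) * Nat.fib (a * m) : ℤ) ≡
      (a * Nat.fib m * (lucas m) ^ (a - 1) : ℤ) [ZMOD ((Nat.fib m : ℤ) ^ 2)] := by
  obtain ⟨b, rfl⟩ : ∃ b, a = b + 1 := ⟨a - 1, (Nat.succ_pred_eq_of_pos ha).symm⟩
  simpa using (key_lemma m b).1
end

section
/- For a prime p > 2 and a positive integer t, the fundamental period of p^(t+1) equals either the fundamental period of p^t or p times the fundamental period of p^t. -/
/-!
Fibonacci numbers form a strong divisibility sequence, so `K ∣ fib n` exactly when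
`fundPeriod K ∣ n`. Write `m = fundPeriod (p ^ t)`. Modulo `fib m ^ 2` one has
`fib (p * m) ≡ p * fib m * fib (m + 1) ^ (p - 1)`, and both `fib m ^ 2` and `p * fib m` are
divisible by `p ^ (t + 1)` because `t ≥ 1`. Hence `fundPeriod (p ^ (t + 1))` divides `p * m` and
is divisible by `m`; as `p` is prime it is `m` or `p * m`.
-/

noncomputable def fundPeriod (K : ℕ) : ℕ := sInf {k : ℕ | 0 < k ∧ K ∣ Nat.fib k}

open Nat

theorem Nat.IsStrongDvdSequence.dvd_iff_sInf_dvd {f : ℕ → ℕ} (hf : IsStrongDvdSequence f)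
    {K : ℕ} (hK : ∃ k, 0 < k ∧ K ∣ f k) (n : ℕ) :
    K ∣ f n ↔ sInf {k | 0 < k ∧ K ∣ f k} ∣ n := by
  set r := sInf {k | 0 < k ∧ K ∣ f k}
  obtain ⟨hr_pos, hr_dvd⟩ : 0 < r ∧ K ∣ f r := Nat.sInf_mem hK
  refine ⟨fun hn => ?_, fun hrn => hr_dvd.trans (hf.isDvdSequence r n hrn)⟩
  rw [← Nat.gcd_eq_left_iff_dvd]
  refine le_antisymm (Nat.le_of_dvd hr_pos (Nat.gcd_dvd_left r n)) (Nat.sInf_le ⟨?_, ?_⟩)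
  · exact Nat.gcd_pos_of_pos_left n hr_pos
  · rw [← hf]
    exact Nat.dvd_gcd hr_dvd hn

def fibStep (R : Type*) [Ring R] : Equiv.Perm (R × R) where
  toFun x := (x.2, x.1 + x.2)
  invFun x := (x.2 - x.1, x.1)
  left_inv x := by simp
  right_inv x := by simp

theorem fibStep_pow_apply_zero_one (R : Type*) [Ring R] (n : ℕ) :
    (fibStep R ^ n) (0, 1) = ((fib n : R), (fib (n + 1) : R)) := by
  induction n with
  | zero => simp
  | succ n ih =>
    rw [_root_.pow_succ', Equiv.Perm.mul_apply, ih, fib_add_two]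
    simp [fibStep]

theorem exists_pos_fib_dvd {K : ℕ} (hK : K ≠ 0) : ∃ k, 0 < k ∧ K ∣ fib k := by
  have : NeZero K := ⟨hK⟩
  refine ⟨orderOf (fibStep (ZMod K)), orderOf_pos _, ?_⟩
  have h := congrArg Prod.fst (fibStep_pow_apply_zero_one (ZMod K) (orderOf (fibStep (ZMod K))))
  rw [pow_orderOf_eq_one] at h
  exact (ZMod.natCast_eq_zero_iff _ _).mp h.symm

theorem fundPeriod_pos {K : ℕ} (hK : K ≠ 0) : 0 < fundPeriod K :=
  (Nat.sInf_mem (exists_pos_fib_dvd hK)).1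

theorem dvd_fib_iff_fundPeriod_dvd {K : ℕ} (hK : K ≠ 0) (n : ℕ) :
    K ∣ fib n ↔ fundPeriod K ∣ n :=
  isStrongDvdSequence_fib.dvd_iff_sInf_dvd (exists_pos_fib_dvd hK) n

theorem fib_add_add_fib_mul_fib (n m : ℕ) :
    fib (n + m) + fib n * fib m = fib n * fib (m + 1) + fib (n + 1) * fib m := by
  cases m with
  | zero => simp
  | succ m =>
    rw [← add_assoc, fib_add, fib_add_two]
    ring

section SqEqZero

variable {R : Type*} [CommRing R] {m : ℕ} (hm : (fib m : R) ^ 2 = 0)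
include hm

theorem cast_fib_mul_mul_cast_fib_eq_zero (k : ℕ) : (fib (k * m) : R) * fib m = 0 := by
  obtain ⟨c, hc⟩ := fib_dvd m (k * m) (dvd_mul_left m k)
  rw [hc, Nat.cast_mul]
  linear_combination (c : R) * hm

theorem cast_fib_mul_add_one_of_sq_eq_zero (k : ℕ) :
    (fib (k * m + 1) : R) = (fib (m + 1) : R) ^ k := by
  induction k with
  | zero => simp
  | succ k ih =>
    have h := congrArg (Nat.cast : ℕ → R) (fib_add (k * m) m)
    push_cast at h
    rw [_root_.add_one_mul, h, ih, cast_fib_mul_mul_cast_fib_eq_zero hm]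
    ring

theorem cast_fib_succ_mul_of_sq_eq_zero (k : ℕ) :
    (fib ((k + 1) * m) : R) = (k + 1) * fib m * (fib (m + 1) : R) ^ k := by
  induction k with
  | zero => simp
  | succ k ih =>
    have h := congrArg (Nat.cast : ℕ → R) (fib_add_add_fib_mul_fib ((k + 1) * m) m)
    push_cast at h
    rw [cast_fib_mul_mul_cast_fib_eq_zero hm, cast_fib_mul_add_one_of_sq_eq_zero hm, ih] at h
    rw [_root_.add_one_mul (k + 1)]
    push_cast
    linear_combination h

end SqEqZero

theorem pow_succ_dvd_fib_mul {p t m : ℕ} (ht : 0 < t) (h : p ^ t ∣ fib m) :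
    p ^ (t + 1) ∣ fib (p * m) := by
  have hsq : (fib m : ZMod (p ^ (t + 1))) ^ 2 = 0 := by
    rw [← Nat.cast_pow, ZMod.natCast_eq_zero_iff]
    calc p ^ (t + 1) ∣ p ^ (t * 2) := pow_dvd_pow p (by omega)
      _ = (p ^ t) ^ 2 := pow_mul p t 2
      _ ∣ fib m ^ 2 := pow_dvd_pow_of_dvd h 2
  have hp : (p : ZMod (p ^ (t + 1))) * fib m = 0 := by
    rw [← Nat.cast_mul, ZMod.natCast_eq_zero_iff, pow_succ']
    exact mul_dvd_mul_left p h
  rw [← ZMod.natCast_eq_zero_iff]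
  cases p with
  | zero => simp
  | succ k =>
    rw [cast_fib_succ_mul_of_sq_eq_zero hsq, ← Nat.cast_succ, hp, zero_mul]

theorem fundPeriod_prime_pow_general (p : ℕ) (hp : p.Prime) (t : ℕ) (ht : 0 < t) :
    fundPeriod (p ^ (t + 1)) = fundPeriod (p ^ t) ∨
    fundPeriod (p ^ (t + 1)) = p * fundPeriod (p ^ t) := by
  have hpt : p ^ t ≠ 0 := pow_ne_zero t hp.ne_zero
  have hpt1 : p ^ (t + 1) ≠ 0 := pow_ne_zero (t + 1) hp.ne_zero
  have h_dvd : fundPeriod (p ^ t) ∣ fundPeriod (p ^ (t + 1)) := by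
    rw [← dvd_fib_iff_fundPeriod_dvd hpt]
    exact (pow_dvd_pow p t.le_succ).trans ((dvd_fib_iff_fundPeriod_dvd hpt1 _).2 dvd_rfl)
  have h_dvd_mul : fundPeriod (p ^ (t + 1)) ∣ p * fundPeriod (p ^ t) := by
    rw [← dvd_fib_iff_fundPeriod_dvd hpt1]
    exact pow_succ_dvd_fib_mul ht ((dvd_fib_iff_fundPeriod_dvd hpt _).2 dvd_rfl)
  obtain ⟨d, hd⟩ := h_dvd
  have hdp : d ∣ p := by
    rw [hd, mul_comm p] at h_dvd_mul
    exact Nat.dvd_of_mul_dvd_mul_left (fundPeriod_pos hpt) h_dvd_mul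
  rcases (Nat.dvd_prime hp).1 hdp with rfl | rfl
  · exact Or.inl (by rw [hd, mul_one])
  · exact Or.inr (by rw [hd, mul_comm])

theorem fundPeriod_prime_pow (p : ℕ) (hp : p.Prime) (hp2 : 2 < p) (t : ℕ) (ht : 0 < t) :
    fundPeriod (p ^ (t + 1)) = fundPeriod (p ^ t) ∨
    fundPeriod (p ^ (t + 1)) = p * fundPeriod (p ^ t) :=
  fundPeriod_prime_pow_general p hp t ht
end

section
/- For a prime p > 3 and any positive integer t, no odd Fibonacci number is divisible by p^t if and only if no odd Fibonacci number is divisible by p. -/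
lemma fib_step (A B C x y : ℤ) (j : ℕ) (hC : B = C + A)
    (hx : A^2 ∣ x - ((j:ℤ)+1)*A*B^j) (hy : A^2 ∣ y - B^(j+1)) :
    A^2 ∣ (x*C + y*A - ((j:ℤ)+2)*A*B^(j+1)) ∧ A^2 ∣ (x*A + y*B - B^(j+2)) := by
  obtain ⟨u, hu⟩ := hx; obtain ⟨v, hv⟩ := hy
  have hx' : x = A^2*u + ((j:ℤ)+1)*A*B^j := by linarith
  have hy' : y = A^2*v + B^(j+1) := by linarith
  have hC' : C = B - A := by linarith
  subst hx' hy' hC'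
  exact ⟨⟨u*B - A*u - ((j:ℤ)+1)*B^j + A*v, by ring⟩,
    ⟨A*u + ((j:ℤ)+1)*B^j + B*v, by ring⟩⟩

lemma fib_mul_cong (m : ℕ) (hm : 1 ≤ m) (k : ℕ) :
    ((Nat.fib m : ℤ))^2 ∣ (Nat.fib (k*m) : ℤ) - (k:ℤ) * Nat.fib m * Nat.fib (m+1) ^ (k-1)
    ∧ ((Nat.fib m : ℤ))^2 ∣ (Nat.fib (k*m+1) : ℤ) - (Nat.fib (m+1):ℤ) ^ k := by
  obtain ⟨m', rfl⟩ : ∃ m', m = m' + 1 := ⟨m-1, by omega⟩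
  induction k with
  | zero => simp
  | succ k ih =>
    match k, ih with
    | 0, _ => simp
    | (j+1), ih =>
      obtain ⟨hx, hy⟩ := ih
      have hadd1 : Nat.fib ((j+1)*(m'+1) + m' + 1)
          = Nat.fib ((j+1)*(m'+1)) * Nat.fib m' + Nat.fib ((j+1)*(m'+1)+1) * Nat.fib (m'+1) :=
        Nat.fib_add _ _
      have hadd2 : Nat.fib ((j+1)*(m'+1) + (m'+1) + 1)
          = Nat.fib ((j+1)*(m'+1)) * Nat.fib (m'+1) + Nat.fib ((j+1)*(m'+1)+1) * Nat.fib (m'+1+1) :=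
        Nat.fib_add _ _
      have hB : (Nat.fib (m'+1+1) : ℤ) = (Nat.fib m' : ℤ) + Nat.fib (m'+1) := by
        push_cast [Nat.fib_add_two]; ring
      have key := fib_step (Nat.fib (m'+1) : ℤ) (Nat.fib (m'+1+1)) (Nat.fib m')
        (Nat.fib ((j+1)*(m'+1))) (Nat.fib ((j+1)*(m'+1)+1)) j hB
        (by simpa using hx) (by simpa using hy)
      have e1 : (j+2)*(m'+1) = (j+1)*(m'+1) + m' + 1 := by ring
      have e2 : (j+2)*(m'+1) + 1 = (j+1)*(m'+1) + (m'+1) + 1 := by ring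
      constructor
      · rw [e1, hadd1]
        have := key.1
        push_cast
        convert this using 2 <;> push_cast <;> ring
      · rw [e2, hadd2]
        have := key.2
        push_cast
        convert this using 2 <;> push_cast <;> ring

lemma fib_lift (p m j : ℕ) (hm : 1 ≤ m) (hj : 1 ≤ j) (h : p^j ∣ Nat.fib m) :
    p^(j+1) ∣ Nat.fib (p*m) := by
  have key := (fib_mul_cong m hm p).1
  rw [← Int.natCast_dvd_natCast]
  push_cast at key ⊢
  have h1 : (p:ℤ)^(j+1) ∣ ((Nat.fib m : ℤ))^2 := by
    have : (p:ℤ)^j ∣ (Nat.fib m : ℤ) := by exact_mod_cast h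
    calc (p:ℤ)^(j+1) ∣ (p:ℤ)^(2*j) := pow_dvd_pow _ (by omega)
      _ = ((p:ℤ)^j)^2 := by ring
      _ ∣ _ := pow_dvd_pow_of_dvd this 2
  have h2 : (p:ℤ)^(j+1) ∣ (p:ℤ) * Nat.fib m * Nat.fib (m+1) ^ (p-1) := by
    have : (p:ℤ)^j ∣ (Nat.fib m : ℤ) := by exact_mod_cast h
    exact Dvd.dvd.mul_right (by rw [pow_succ, mul_comm]; exact mul_dvd_mul dvd_rfl this) _
  have := dvd_add (h1.trans key) h2
  simpa using this


lemma fib_odd_of_not_three_dvd (M : ℕ) (hM : ¬ 3 ∣ M) : Odd (Nat.fib M) := by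
  rw [Nat.odd_iff, ← Nat.two_dvd_ne_zero]
  intro h2
  have hg : Nat.gcd 3 M = 1 := (Nat.Prime.coprime_iff_not_dvd (by norm_num)).mpr hM
  have : Nat.gcd (Nat.fib 3) (Nat.fib M) = Nat.fib (Nat.gcd 3 M) := (Nat.fib_gcd 3 M).symm
  rw [hg] at this
  have h3 : Nat.fib 3 = 2 := rfl
  have h1 : Nat.fib 1 = 1 := rfl
  rw [h3, h1] at this
  have := Nat.dvd_gcd (dvd_refl 2) h2
  omega

theorem no_odd_fib_div_pow_iff (p : ℕ) (hp : p.Prime) (hp3 : 3 < p) (t : ℕ) (ht : 0 < t) :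
    (∀ n : ℕ, Odd (Nat.fib n) → ¬ (p ^ t ∣ Nat.fib n)) ↔
    (∀ n : ℕ, Odd (Nat.fib n) → ¬ (p ∣ Nat.fib n)) := by
  constructor
  · intro H n hodd hdvd
    have hn3 : ¬ 3 ∣ n := by
      intro h3
      have h := Nat.fib_dvd 3 n h3
      have h2 : (2:ℕ) ∣ Nat.fib n := by simpa [show Nat.fib 3 = 2 from rfl] using h
      rw [Nat.odd_iff] at hodd
      omega
    have hn1 : 1 ≤ n := by
      rcases Nat.eq_zero_or_pos n with h | h
      · subst h; simp [Nat.odd_iff] at hodd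
      · exact h
    -- lifting: p^(s+1) ∣ fib (p^s * n)
    have lift : ∀ s : ℕ, p^(s+1) ∣ Nat.fib (p^s * n) := by
      intro s
      induction s with
      | zero => simpa using hdvd
      | succ s ih =>
        have hm : 1 ≤ p^s * n := Nat.one_le_iff_ne_zero.mpr (by positivity)
        have := fib_lift p (p^s * n) (s+1) hm (by omega) ih
        rwa [← mul_assoc, ← pow_succ'] at this
    have hM3 : ¬ 3 ∣ p^(t-1) * n := by
      intro h
      rcases (Nat.Prime.dvd_mul (by norm_num)).mp h with h | h
      · have h3p := Nat.Prime.dvd_of_dvd_pow (p := 3) (by norm_num) h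
        have := (Nat.prime_dvd_prime_iff_eq (by norm_num) hp).mp h3p
        omega
      · exact hn3 h
    have hModd : Odd (Nat.fib (p^(t-1) * n)) := fib_odd_of_not_three_dvd _ hM3
    have hMdvd : p^t ∣ Nat.fib (p^(t-1) * n) := by
      have := lift (t-1)
      rwa [Nat.sub_add_cancel ht] at this
    exact H _ hModd hMdvd
  · intro H n hodd hdvd
    exact H n hodd ((dvd_pow_self p ht.ne').trans hdvd)
end
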